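/- Fix a real number R > 0 and real numbers K and J. For L in (0, 2R) with L != R define tau2(L) := 3*(7R^2 - 8RL + 2L^2)/(256*R^2*(R - L)*sqrt(L*(2R - L))) - sqrt(L)*(27R^2 - 40RL + 10L^2)*K/(384*R*(R - L)*(2R - L)^(3/2)) + L^(3/2)*(31R^2 - 36RL + 6L^2)*K^2/(768*(R - L)*(2R - L)^(5/2)) - L^(3/2)*R*J/(192*(2R - L)^(3/2)). Then (R - L)*tau2(L) tends to (3 + R*K)^2/(768*R) as L tends to R (with L != R). In particular, tau2 has a simple pole at L = R exactly when 3 + R*K != 0. -/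

import Mathlib

open Filter Topology

/-! Only the first three terms of `τ₂` carry the factor `1 / (R - L)`. Multiplying by `R - L`
cancels it and leaves a function that is continuous at `L = R`, since every radicand is positive
there. Its value at `R`, computed with `√(R R) = R`, `R^{3/2} = R √R` and `R^{5/2} = R² √R`, is
`3 / (256 R) + K / 128 + R K² / 768 = (3 + R K)² / (768 R)`. -/

noncomputable def tau2Formula (R K J L : ℝ) : ℝ :=
  3 * (7 * R ^ 2 - 8 * R * L + 2 * L ^ 2)
      / (256 * R ^ 2 * (R - L) * Real.sqrt (L * (2 * R - L)))
    - Real.sqrt L * (27 * R ^ 2 - 40 * R * L + 10 * L ^ 2) * K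
      / (384 * R * (R - L) * (2 * R - L) ^ ((3 : ℝ) / 2))
    + L ^ ((3 : ℝ) / 2) * (31 * R ^ 2 - 36 * R * L + 6 * L ^ 2) * K ^ 2
      / (768 * (R - L) * (2 * R - L) ^ ((5 : ℝ) / 2))
    - L ^ ((3 : ℝ) / 2) * R * J / (192 * (2 * R - L) ^ ((3 : ℝ) / 2))

noncomputable def tau2RegularPart (R K J L : ℝ) : ℝ :=
  3 * (7 * R ^ 2 - 8 * R * L + 2 * L ^ 2) / (256 * R ^ 2 * Real.sqrt (L * (2 * R - L)))
    - Real.sqrt L * (27 * R ^ 2 - 40 * R * L + 10 * L ^ 2) * K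
      / (384 * R * (2 * R - L) ^ ((3 : ℝ) / 2))
    + L ^ ((3 : ℝ) / 2) * (31 * R ^ 2 - 36 * R * L + 6 * L ^ 2) * K ^ 2
      / (768 * (2 * R - L) ^ ((5 : ℝ) / 2))
    - (R - L) * (L ^ ((3 : ℝ) / 2) * R * J / (192 * (2 * R - L) ^ ((3 : ℝ) / 2)))

lemma mul_div_mul_mul_cancel {α : Type*} [Field α] {a : α} (b c d : α) (ha : a ≠ 0) :
    a * (b / (c * a * d)) = b / (c * d) := by
  rw [mul_comm c, mul_assoc, ← mul_div_assoc, mul_div_mul_left _ _ ha]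

lemma Real.rpow_three_halves {x : ℝ} (hx : 0 ≤ x) : x ^ (3 / 2 : ℝ) = x * √x := by
  rw [show (3 / 2 : ℝ) = 1 + 1 / 2 by norm_num, Real.rpow_add' hx (by norm_num), Real.rpow_one,
    Real.sqrt_eq_rpow]

lemma Real.rpow_five_halves {x : ℝ} (hx : 0 ≤ x) : x ^ (5 / 2 : ℝ) = x ^ 2 * √x := by
  rw [show (5 / 2 : ℝ) = 2 + 1 / 2 by norm_num, Real.rpow_add' hx (by norm_num),
    Real.rpow_two, Real.sqrt_eq_rpow]

theorem sub_mul_tau2Formula {R L : ℝ} (K J : ℝ) (hLR : L ≠ R) :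
    (R - L) * tau2Formula R K J L = tau2RegularPart R K J L := by
  rw [tau2Formula, tau2RegularPart, mul_sub, mul_add, mul_sub]
  simp only [mul_div_mul_mul_cancel _ _ _ (sub_ne_zero.mpr hLR.symm)]

theorem tau2RegularPart_self {R : ℝ} (K J : ℝ) (hR : 0 < R) :
    tau2RegularPart R K J R = (3 + R * K) ^ 2 / (768 * R) := by
  have hsqrt : 0 < √R := Real.sqrt_pos.mpr hR
  simp only [tau2RegularPart, show 2 * R - R = R by ring, Real.sqrt_mul_self hR.le,
    Real.rpow_three_halves hR.le, Real.rpow_five_halves hR.le, sub_self, zero_mul, sub_zero]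
  field_simp
  ring

theorem continuousAt_tau2RegularPart {R : ℝ} (K J : ℝ) (hR : 0 < R) :
    ContinuousAt (tau2RegularPart R K J) R := by
  have hsqrt : 0 < √(R * (2 * R - R)) := Real.sqrt_pos.mpr (by nlinarith)
  have h32 : 0 < (2 * R - R) ^ (3 / 2 : ℝ) := Real.rpow_pos_of_pos (by linarith) _
  have h52 : 0 < (2 * R - R) ^ (5 / 2 : ℝ) := Real.rpow_pos_of_pos (by linarith) _
  unfold tau2RegularPart
  fun_prop (disch := first | positivity | norm_num)

theorem tendsto_sub_mul_tau2Formula {R : ℝ} (K J : ℝ) (hR : 0 < R) :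
    Tendsto (fun L => (R - L) * tau2Formula R K J L) (𝓝[≠] R)
      (𝓝 ((3 + R * K) ^ 2 / (768 * R))) := by
  rw [← tau2RegularPart_self K J hR]
  refine ((continuousAt_tau2RegularPart K J hR).tendsto.mono_left nhdsWithin_le_nhds).congr' ?_
  filter_upwards [self_mem_nhdsWithin] with L hL
  exact (sub_mul_tau2Formula K J hL).symm

theorem tau2_simple_pole_at_L_eq_R (R K J : ℝ) (hR : 0 < R)
    (tau2 : ℝ → ℝ)
    (htau2 : ∀ L : ℝ, tau2 L =
      3 * (7 * R ^ 2 - 8 * R * L + 2 * L ^ 2)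
        / (256 * R ^ 2 * (R - L) * Real.sqrt (L * (2 * R - L)))
      - Real.sqrt L * (27 * R ^ 2 - 40 * R * L + 10 * L ^ 2) * K
        / (384 * R * (R - L) * (2 * R - L) ^ ((3 : ℝ) / 2))
      + L ^ ((3 : ℝ) / 2) * (31 * R ^ 2 - 36 * R * L + 6 * L ^ 2) * K ^ 2
        / (768 * (R - L) * (2 * R - L) ^ ((5 : ℝ) / 2))
      - L ^ ((3 : ℝ) / 2) * R * J / (192 * (2 * R - L) ^ ((3 : ℝ) / 2))) :
    Tendsto (fun L : ℝ => (R - L) * tau2 L) (𝓝[≠] R)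
      (𝓝 ((3 + R * K) ^ 2 / (768 * R))) := by
  rw [show tau2 = tau2Formula R K J from funext htau2]
  exact tendsto_sub_mul_tau2Formula K J hR
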